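/- arXiv:1608.07061 — 3 statements merged into one kernel-verified Lean document; each statement's English description precedes it below -/
import Mathlib

section
/- Let α ∈ (0,1), let i ∈ ℕ, and let x ∈ (0,1); set y = 1−x. Then the series ∑_{j=0}^∞ (Γ(j+1+α)/Γ(j+1)) · ((j+i)!/j!) · x^j converges and equals (i!/y^{i+1+α}) · ∑_{k=0}^{i} (Γ(i−k+1+α)/(i−k)!) · (Γ(α+1)/(Γ(α−k+1)·k!)) · (−y)^k. -/
open Real Finset Filter

private lemma summable_aux (b : ℝ) (hb : 0 < b) (q : ℝ) (hq0 : 0 < q) (hq1 : q < 1) :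
    Summable (fun j : ℕ =>
      Real.Gamma (j + b) / (Real.Gamma b * j.factorial) * ((j : ℝ) + 1) * q ^ j) := by
  set c : ℕ → ℝ := fun j => Real.Gamma (j + b) / (Real.Gamma b * j.factorial) with hc
  have hcpos : ∀ j, 0 < c j := fun j =>
    div_pos (Real.Gamma_pos_of_pos (by positivity))
      (mul_pos (Real.Gamma_pos_of_pos hb) (by positivity))
  have hcsucc : ∀ j : ℕ, c (j + 1) = c j * (((j : ℝ) + b) / ((j : ℝ) + 1)) := by
    intro j
    have h1 : Real.Gamma (↑(j + 1) + b) = ((j : ℝ) + b) * Real.Gamma (j + b) := by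
      have : (↑(j + 1) : ℝ) + b = ((j : ℝ) + b) + 1 := by push_cast; ring
      rw [this, Real.Gamma_add_one (by positivity)]
    have h2 : ((j + 1).factorial : ℝ) = ((j : ℝ) + 1) * (j.factorial : ℝ) := by
      rw [Nat.factorial_succ]; push_cast; ring
    have hj1 : ((j : ℝ) + 1) ≠ 0 := by positivity
    have hG : Real.Gamma b ≠ 0 := (Real.Gamma_pos_of_pos hb).ne'
    have hf : (j.factorial : ℝ) ≠ 0 := by positivity
    simp only [hc, h1, h2]
    field_simp
  set t : ℕ → ℝ := fun j => (((j : ℝ) + b) / ((j : ℝ) + 1)) * (((j : ℝ) + 2) / ((j : ℝ) + 1)) * q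
    with htdef
  have ht : Tendsto t atTop (nhds ((1 : ℝ) * 1 * q)) := by
    have h0 : Tendsto (fun j : ℕ => 1 / ((j : ℝ) + 1)) atTop (nhds 0) :=
      tendsto_one_div_add_atTop_nhds_zero_nat
    have h1 : Tendsto (fun j : ℕ => ((j : ℝ) + b) / ((j : ℝ) + 1)) atTop (nhds 1) := by
      have : (fun j : ℕ => ((j : ℝ) + b) / ((j : ℝ) + 1))
          = fun j : ℕ => 1 + (b - 1) * (1 / ((j : ℝ) + 1)) := by
        funext j
        have hj1 : ((j : ℝ) + 1) ≠ 0 := by positivity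
        field_simp
        ring
      rw [this]
      have := (h0.const_mul (b - 1)).const_add 1
      simpa using this
    have h2 : Tendsto (fun j : ℕ => ((j : ℝ) + 2) / ((j : ℝ) + 1)) atTop (nhds 1) := by
      have : (fun j : ℕ => ((j : ℝ) + 2) / ((j : ℝ) + 1))
          = fun j : ℕ => 1 + 1 * (1 / ((j : ℝ) + 1)) := by
        funext j
        have hj1 : ((j : ℝ) + 1) ≠ 0 := by positivity
        field_simp
        ring
      rw [this]
      have := (h0.const_mul (1 : ℝ)).const_add 1
      simpa using this
    exact (h1.mul h2).mul_const q
  rw [show (1 : ℝ) * 1 * q = q by ring] at ht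
  apply summable_of_ratio_norm_eventually_le (r := (1 + q) / 2) (by linarith)
  have hev : ∀ᶠ j : ℕ in atTop, t j < (1 + q) / 2 :=
    ht.eventually_lt_const (by linarith)
  filter_upwards [hev] with j hj
  have hfpos : ∀ m : ℕ, 0 < c m * ((m : ℝ) + 1) * q ^ m := fun m => by
    have := hcpos m; positivity
  have hkey : c (j + 1) * ((↑(j + 1) : ℝ) + 1) * q ^ (j + 1)
      = t j * (c j * ((j : ℝ) + 1) * q ^ j) := by
    rw [hcsucc j, htdef]
    have hj1 : ((j : ℝ) + 1) ≠ 0 := by positivity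
    push_cast
    field_simp
    ring
  rw [Real.norm_eq_abs, Real.norm_eq_abs, abs_of_pos (hfpos (j + 1)), abs_of_pos (hfpos j), hkey]
  exact mul_le_mul_of_nonneg_right hj.le (hfpos j).le

private lemma hasSum_binomial (b : ℝ) (hb : 0 < b) (x : ℝ) (hx0 : 0 < x) (hx1 : x < 1) :
    HasSum (fun j : ℕ => Real.Gamma (j + b) / (Real.Gamma b * j.factorial) * x ^ j)
      ((1 - x) ^ (-b) : ℝ) := by
  set c : ℕ → ℝ := fun j => Real.Gamma (j + b) / (Real.Gamma b * j.factorial) with hc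
  have hcpos : ∀ j, 0 < c j := fun j =>
    div_pos (Real.Gamma_pos_of_pos (by positivity))
      (mul_pos (Real.Gamma_pos_of_pos hb) (by positivity))
  have hcsucc : ∀ j : ℕ, c (j + 1) * ((j : ℝ) + 1) = c j * ((j : ℝ) + b) := by
    intro j
    have h1 : Real.Gamma (↑(j + 1) + b) = ((j : ℝ) + b) * Real.Gamma (j + b) := by
      have : (↑(j + 1) : ℝ) + b = ((j : ℝ) + b) + 1 := by push_cast; ring
      rw [this, Real.Gamma_add_one (by positivity)]
    have h2 : ((j + 1).factorial : ℝ) = ((j : ℝ) + 1) * (j.factorial : ℝ) := by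
      rw [Nat.factorial_succ]; push_cast; ring
    have hj1 : ((j : ℝ) + 1) ≠ 0 := by positivity
    have hG : Real.Gamma b ≠ 0 := (Real.Gamma_pos_of_pos hb).ne'
    have hf : (j.factorial : ℝ) ≠ 0 := by positivity
    simp only [hc, h1, h2]
    field_simp
  set r : ℝ := (x + 1) / 2 with hrdef
  have hr0 : 0 < r := by rw [hrdef]; linarith
  have hrx : x < r := by rw [hrdef]; linarith
  have hr1 : r < 1 := by rw [hrdef]; linarith
  set T : Set ℝ := Set.Ioo (-r) r with hT
  have hmem : ∀ z ∈ Set.Icc (0 : ℝ) x, z ∈ T := fun z hz =>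
    ⟨by linarith [hz.1], by linarith [hz.2]⟩
  have hmem0 : (0 : ℝ) ∈ T := ⟨by linarith, hr0⟩
  have hmemx : x ∈ T := hmem x ⟨hx0.le, le_refl x⟩
  set g : ℕ → ℝ → ℝ := fun j z => c j * z ^ j with hg
  set g' : ℕ → ℝ → ℝ := fun j z => c j * ((j : ℝ) * z ^ (j - 1)) with hg'
  set u : ℕ → ℝ := fun j => (1 / r) * (c j * ((j : ℝ) + 1) * r ^ j) with hu'
  have hu : Summable u := (summable_aux b hb r hr0 hr1).mul_left _
  have hgderiv : ∀ (j : ℕ), ∀ z ∈ T, HasDerivAt (g j) (g' j z) z := fun j z _ =>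
    (hasDerivAt_pow j z).const_mul (c j)
  have hbound : ∀ (j : ℕ), ∀ z ∈ T, ‖g' j z‖ ≤ u j := by
    intro j z hz
    have hzr : |z| ≤ r := by
      rw [abs_le]; exact ⟨hz.1.le, hz.2.le⟩
    cases j with
    | zero =>
      simp only [hg', hu', Nat.cast_zero, zero_mul, mul_zero, norm_zero]
      have := hcpos 0
      positivity
    | succ n =>
      have h1 : ‖g' (n + 1) z‖ = c (n + 1) * ((n : ℝ) + 1) * |z| ^ n := by
        have he : g' (n + 1) z = c (n + 1) * (((n : ℝ) + 1) * z ^ n) := by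
          simp only [hg', Nat.add_sub_cancel]
          push_cast
          ring
        rw [he, Real.norm_eq_abs, abs_mul, abs_of_pos (hcpos (n + 1)), abs_mul, abs_pow,
          abs_of_nonneg (by positivity : (0:ℝ) ≤ (n : ℝ) + 1)]
        ring
      rw [h1]
      have h2 : c (n + 1) * ((n : ℝ) + 1) * |z| ^ n ≤ c (n + 1) * ((n : ℝ) + 1) * r ^ n := by
        have hp : |z| ^ n ≤ r ^ n := pow_le_pow_left₀ (abs_nonneg z) hzr n
        exact mul_le_mul_of_nonneg_left hp (mul_pos (hcpos (n + 1)) (by positivity)).le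
      refine h2.trans ?_
      have h3 : u (n + 1) = c (n + 1) * ((↑(n + 1) : ℝ) + 1) * r ^ n := by
        rw [hu']
        have : r ^ (n + 1) = r * r ^ n := by ring
        field_simp [this]
        ring
      rw [h3]
      have := hcpos (n + 1)
      have hrn : (0:ℝ) < r ^ n := by positivity
      push_cast
      nlinarith
  have hsum0 : Summable fun j => g j 0 := by
    apply summable_of_ne_finset_zero (s := {0})
    intro j hj
    have : j ≠ 0 := by simpa using hj
    simp [hg, zero_pow this]
  set f : ℝ → ℝ := fun z => ∑' j, g j z with hf
  have hder : ∀ z ∈ T, HasDerivAt f (∑' j, g' j z) z := fun z hz =>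
    hasDerivAt_tsum_of_isPreconnected hu isOpen_Ioo isPreconnected_Ioo
      hgderiv hbound hmem0 hsum0 hz
  have hSz : ∀ z ∈ T, Summable fun j => g j z := by
    intro z hz
    have hzr : |z| ≤ r := by rw [abs_le]; exact ⟨hz.1.le, hz.2.le⟩
    apply Summable.of_norm_bounded (summable_aux b hb r hr0 hr1)
    intro j
    simp only [hg, Real.norm_eq_abs, abs_mul, abs_of_pos (hcpos j), abs_pow]
    have hp : |z| ^ j ≤ r ^ j := pow_le_pow_left₀ (abs_nonneg z) hzr j
    have hcj := hcpos j
    calc c j * |z| ^ j ≤ c j * r ^ j := mul_le_mul_of_nonneg_left hp hcj.le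
      _ ≤ c j * ((j : ℝ) + 1) * r ^ j := by
          have h1 : c j ≤ c j * ((j : ℝ) + 1) := by nlinarith
          calc c j * r ^ j ≤ (c j * ((j : ℝ) + 1)) * r ^ j :=
                mul_le_mul_of_nonneg_right h1 (pow_nonneg hr0.le j)
            _ = c j * ((j : ℝ) + 1) * r ^ j := by ring
  have hS'z : ∀ z ∈ T, Summable fun j => g' j z := fun z hz =>
    Summable.of_norm_bounded hu (fun j => hbound j z hz)
  -- the ODE identity
  have hODE : ∀ z ∈ T, (1 - z) * (∑' j, g' j z) = b * f z := by
    intro z hz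
    set D : ℝ := ∑' j, g' j z with hD
    have H : HasSum (fun j => g' j z) D := (hS'z z hz).hasSum
    have H1 : HasSum (fun n => g' (n + 1) z) D := by
      have h0 : g' 0 z = 0 := by simp [hg']
      refine (hasSum_nat_add_iff (f := fun n => g' n z) 1).mpr ?_
      simpa [h0] using H
    have e1 : (fun n => g' (n + 1) z) = fun n => c n * ((n : ℝ) + b) * z ^ n := by
      funext n
      have : g' (n + 1) z = c (n + 1) * ((↑(n + 1) : ℝ)) * z ^ n := by
        simp only [hg', Nat.add_sub_cancel]
        push_cast
        ring
      rw [this]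
      have hrec := hcsucc n
      push_cast
      linear_combination (z ^ n) * hrec
    rw [e1] at H1
    have H3 : HasSum (fun n => z * (c n * ((n : ℝ) + b) * z ^ n)) (z * D) := H1.mul_left z
    have e2 : (fun n => z * (c n * ((n : ℝ) + b) * z ^ n))
        = fun n => c (n + 1) * ((↑(n + 1) : ℝ)) * z ^ (n + 1) := by
      funext n
      have hrec := hcsucc n
      push_cast
      linear_combination (-(z * z ^ n)) * hrec
    rw [e2] at H3
    have H4 : HasSum (fun n => c n * (n : ℝ) * z ^ n) (z * D) := by
      have h4' : HasSum (fun n => (fun m : ℕ => c m * (m : ℝ) * z ^ m) (n + 1)) (z * D) := H3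
      have h4'' := (hasSum_nat_add_iff (f := fun m : ℕ => c m * (m : ℝ) * z ^ m)
        (g := z * D) 1).mp h4'
      simpa using h4''
    have H5 : HasSum (fun n => c n * z ^ n) (f z) := (hSz z hz).hasSum
    have H6 : HasSum (fun n => c n * ((n : ℝ) + b) * z ^ n - c n * (n : ℝ) * z ^ n)
        (D - z * D) := H1.sub H4
    have e3 : (fun n => c n * ((n : ℝ) + b) * z ^ n - c n * (n : ℝ) * z ^ n)
        = fun n => b * (c n * z ^ n) := by
      funext n; ring
    rw [e3] at H6
    have := H6.unique (H5.mul_left b)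
    linarith [this]
  -- the constancy argument
  set φ : ℝ → ℝ := fun z => f z * (1 - z) ^ b with hφ
  have hφ' : ∀ z ∈ Set.Icc (0 : ℝ) x, HasDerivAt φ 0 z := by
    intro z hz
    have hzT : z ∈ T := hmem z hz
    have h1z : (0 : ℝ) < 1 - z := by
      have := hz.2; linarith
    have hd1 : HasDerivAt f (∑' j, g' j z) z := hder z hzT
    have hd2 : HasDerivAt (fun w : ℝ => (1 - w) ^ b) (-1 * b * (1 - z) ^ (b - 1)) z := by
      have hbase : HasDerivAt (fun w : ℝ => 1 - w) (-1) z := by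
        simpa using (hasDerivAt_id z).const_sub 1
      exact hbase.rpow_const (Or.inl h1z.ne')
    have := hd1.mul hd2
    have hval : (∑' j, g' j z) * (1 - z) ^ b + f z * (-1 * b * (1 - z) ^ (b - 1)) = 0 := by
      have hid := hODE z hzT
      have hpow : (1 - z) ^ b = (1 - z) * (1 - z) ^ (b - 1) := by
        rw [show b = 1 + (b - 1) by ring, Real.rpow_add h1z, Real.rpow_one]
        ring_nf
      rw [hpow]
      linear_combination ((1 - z) ^ (b - 1)) * hid
    rw [hval] at this
    exact this
  have hconst : φ x = φ 0 := by
    have hcont : ContinuousOn φ (Set.Icc 0 x) := fun z hz =>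
      (hφ' z hz).continuousAt.continuousWithinAt
    have hderiv : ∀ z ∈ Set.Ico (0 : ℝ) x, HasDerivWithinAt φ 0 (Set.Ici z) z := fun z hz =>
      (hφ' z (Set.Ico_subset_Icc_self hz)).hasDerivWithinAt
    exact constant_of_has_deriv_right_zero hcont hderiv x ⟨hx0.le, le_refl x⟩
  have hφ0 : φ 0 = 1 := by
    have hfs0 : HasSum (fun j => g j 0) (g 0 0) :=
      hasSum_single 0 (fun j hj => by simp [hg, zero_pow hj])
    have hf0 : f 0 = c 0 := by
      rw [show f 0 = ∑' j, g j 0 from rfl, hfs0.tsum_eq]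
      simp [hg]
    have hc0 : c 0 = 1 := by
      simp only [hc, Nat.cast_zero, zero_add, Nat.factorial_zero, Nat.cast_one, mul_one]
      exact div_self (Real.Gamma_pos_of_pos hb).ne'
    simp [hφ, hf0, hc0]
  have hA : (0 : ℝ) < (1 - x) ^ b := Real.rpow_pos_of_pos (by linarith) b
  have hfx : f x = (1 - x) ^ (-b) := by
    have h1 : f x * (1 - x) ^ b = 1 := by
      have h2 := hconst.trans hφ0
      simpa [hφ] using h2
    rw [Real.rpow_neg (by linarith : (0:ℝ) ≤ 1 - x)]
    field_simp at h1 ⊢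
    linarith
  have := (hSz x hmemx).hasSum
  rw [show (∑' j, g j x) = f x from rfl, hfx] at this
  exact this

private noncomputable def Abin (α : ℝ) (k : ℕ) : ℝ :=
  Real.Gamma (α + 1) / (Real.Gamma (α - k + 1) * k.factorial)

private noncomputable def Bfun (α : ℝ) (j n : ℕ) : ℝ :=
  Real.Gamma ((j : ℝ) + 1 + α + n) / n.factorial

private lemma hne1 (α : ℝ) (hα0 : 0 < α) (hα1 : α < 1) (k : ℕ) :
    Real.Gamma (α - k + 1) ≠ 0 := by
  apply Real.Gamma_ne_zero
  intro m h
  rcases le_or_gt (k : ℝ) ((m : ℝ) + 1) with h' | h'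
  · linarith
  · have : ((m : ℝ) + 1 + 1) ≤ (k : ℝ) := by
      have h1 : m + 1 < k := by exact_mod_cast h'
      have h2 : m + 2 ≤ k := h1
      exact_mod_cast h2
    linarith

private lemma hne2 (α : ℝ) (hα0 : 0 < α) (hα1 : α < 1) (k : ℕ) :
    Real.Gamma (α - k) ≠ 0 := by
  apply Real.Gamma_ne_zero
  intro m h
  rcases le_or_gt (k : ℝ) ((m : ℝ)) with h' | h'
  · linarith
  · have : ((m : ℝ) + 1) ≤ (k : ℝ) := by
      have h1 : m < k := by exact_mod_cast h'
      exact_mod_cast h1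
    linarith

private lemma hαk (α : ℝ) (hα0 : 0 < α) (hα1 : α < 1) (k : ℕ) : α - (k : ℝ) ≠ 0 := by
  rcases Nat.eq_zero_or_pos k with h | h
  · subst h; simpa using hα0.ne'
  · have : (1 : ℝ) ≤ (k : ℝ) := by exact_mod_cast h
    intro hc
    have : α = (k : ℝ) := by linarith
    linarith

private lemma Arec (α : ℝ) (hα0 : 0 < α) (hα1 : α < 1) (k : ℕ) :
    ((k : ℝ) + 1) * Abin α (k + 1) = (α - k) * Abin α k := by
  have h1 : Real.Gamma (α - k + 1) = (α - k) * Real.Gamma (α - k) :=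
    Real.Gamma_add_one (hαk α hα0 hα1 k)
  have h2 : α - (↑(k + 1) : ℝ) + 1 = α - k := by push_cast; ring
  have h3 : ((k + 1).factorial : ℝ) = ((k : ℝ) + 1) * (k.factorial : ℝ) := by
    rw [Nat.factorial_succ]; push_cast; ring
  have hk1 : ((k : ℝ) + 1) ≠ 0 := by positivity
  have hkf : (k.factorial : ℝ) ≠ 0 := by positivity
  have hG2 := hne2 α hα0 hα1 k
  have hαk' := hαk α hα0 hα1 k
  simp only [Abin, h2, h3, h1]
  field_simp

private lemma Brec (α : ℝ) (hα0 : 0 < α) (j n : ℕ) :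
    ((n : ℝ) + 1) * Bfun α j (n + 1) = ((j : ℝ) + 1 + α + n) * Bfun α j n := by
  have h1 : Real.Gamma ((j : ℝ) + 1 + α + (↑(n + 1) : ℝ))
      = ((j : ℝ) + 1 + α + n) * Real.Gamma ((j : ℝ) + 1 + α + n) := by
    have he : (j : ℝ) + 1 + α + (↑(n + 1) : ℝ) = ((j : ℝ) + 1 + α + n) + 1 := by
      push_cast; ring
    rw [he, Real.Gamma_add_one (by positivity)]
  have h3 : ((n + 1).factorial : ℝ) = ((n : ℝ) + 1) * (n.factorial : ℝ) := by
    rw [Nat.factorial_succ]; push_cast; ring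
  have hn1 : ((n : ℝ) + 1) ≠ 0 := by positivity
  have hnf : (n.factorial : ℝ) ≠ 0 := by positivity
  simp only [Bfun, h1, h3]
  field_simp

private lemma conv_id (α : ℝ) (hα0 : 0 < α) (hα1 : α < 1) (j : ℕ) (i : ℕ) :
    ∑ k ∈ Finset.range (i + 1), (-1 : ℝ) ^ k * Abin α k * Bfun α j (i - k)
      = (((j + i).choose i : ℕ) : ℝ) * Real.Gamma ((j : ℝ) + 1 + α) := by
  induction i with
  | zero =>
    simp only [zero_add, Finset.range_one, Finset.sum_singleton, pow_zero, Nat.sub_zero, Nat.add_zero,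
      Nat.choose_zero_right, Nat.cast_one, one_mul, Abin, Bfun, Nat.cast_zero,
      Nat.factorial_zero, Nat.cast_one, sub_zero, add_zero, mul_one, div_one]
    have h1 : Real.Gamma (α + 1) ≠ 0 := (Real.Gamma_pos_of_pos (by linarith)).ne'
    field_simp
  | succ i ih =>
    have hkey : ((i : ℝ) + 1) * ∑ k ∈ Finset.range (i + 1 + 1),
          (-1 : ℝ) ^ k * Abin α k * Bfun α j (i + 1 - k)
        = ((j : ℝ) + i + 1) * ∑ k ∈ Finset.range (i + 1),
          (-1 : ℝ) ^ k * Abin α k * Bfun α j (i - k) := by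
      have hsplit : ((i : ℝ) + 1) * ∑ k ∈ Finset.range (i + 1 + 1),
            (-1 : ℝ) ^ k * Abin α k * Bfun α j (i + 1 - k)
          = (∑ k ∈ Finset.range (i + 1 + 1),
              ((i + 1 - k : ℕ) : ℝ) * ((-1 : ℝ) ^ k * Abin α k * Bfun α j (i + 1 - k)))
            + ∑ k ∈ Finset.range (i + 1 + 1),
              (k : ℝ) * ((-1 : ℝ) ^ k * Abin α k * Bfun α j (i + 1 - k)) := by
        rw [Finset.mul_sum, ← Finset.sum_add_distrib]
        refine Finset.sum_congr rfl fun k hk => ?_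
        have hk' : k ≤ i + 1 := Nat.lt_succ_iff.mp (Finset.mem_range.mp hk)
        rw [Nat.cast_sub hk']
        push_cast
        ring
      have h1 : ∑ k ∈ Finset.range (i + 1 + 1),
            ((i + 1 - k : ℕ) : ℝ) * ((-1 : ℝ) ^ k * Abin α k * Bfun α j (i + 1 - k))
          = ∑ k ∈ Finset.range (i + 1),
            (-1 : ℝ) ^ k * Abin α k * (((j : ℝ) + 1 + α + ((i - k : ℕ) : ℝ)) * Bfun α j (i - k)) := by
        rw [Finset.sum_range_succ]
        simp only [Nat.sub_self, Nat.cast_zero, zero_mul, add_zero]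
        refine Finset.sum_congr rfl fun k hk => ?_
        have hk' : k ≤ i := Nat.lt_succ_iff.mp (Finset.mem_range.mp hk)
        have hs : i + 1 - k = (i - k) + 1 := by omega
        rw [hs]
        have hrec := Brec α hα0 j (i - k)
        push_cast
        linear_combination ((-1 : ℝ) ^ k * Abin α k) * hrec
      have h2 : ∑ k ∈ Finset.range (i + 1 + 1),
            (k : ℝ) * ((-1 : ℝ) ^ k * Abin α k * Bfun α j (i + 1 - k))
          = ∑ k ∈ Finset.range (i + 1),
            -((-1 : ℝ) ^ k * ((α - k) * Abin α k) * Bfun α j (i - k)) := by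
        rw [Finset.sum_range_succ']
        simp only [Nat.cast_zero, zero_mul, add_zero]
        refine Finset.sum_congr rfl fun k hk => ?_
        have hs : i + 1 - (k + 1) = i - k := by omega
        rw [hs]
        have hrec := Arec α hα0 hα1 k
        rw [pow_succ]
        push_cast
        linear_combination (-(-1 : ℝ) ^ k * Bfun α j (i - k)) * hrec
      rw [hsplit, h1, h2, ← Finset.sum_add_distrib, Finset.mul_sum]
      refine Finset.sum_congr rfl fun k hk => ?_
      have hk' : k ≤ i := Nat.lt_succ_iff.mp (Finset.mem_range.mp hk)
      rw [Nat.cast_sub hk']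
      ring
    have hnat : ((j : ℝ) + i + 1) * (((j + i).choose i : ℕ) : ℝ)
        = (((j + i + 1).choose (i + 1) : ℕ) : ℝ) * ((i : ℝ) + 1) := by
      have h' : (j + i + 1) * (j + i).choose i = (j + i + 1).choose (i + 1) * (i + 1) :=
        Nat.add_one_mul_choose_eq (j + i) i
      exact_mod_cast congrArg (fun n : ℕ => (n : ℝ)) h'
    apply mul_left_cancel₀ (show ((i : ℝ) + 1) ≠ 0 by positivity)
    rw [hkey, ih]
    have hch : ((j + (i + 1)).choose (i + 1) : ℕ) = ((j + i + 1).choose (i + 1) : ℕ) := rfl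
    rw [hch]
    push_cast at hnat ⊢
    linear_combination Real.Gamma ((j : ℝ) + 1 + α) * hnat

/-- The closed-form evaluation of the generating series
`∑_j (Γ(j+1+α)/Γ(j+1)) ((j+i)!/j!) x^j`, key computation in Lemma A.1. -/
theorem generating_series_closed_form (α : ℝ) (hα : α ∈ Set.Ioo (0 : ℝ) 1)
    (i : ℕ) (x : ℝ) (hx : x ∈ Set.Ioo (0 : ℝ) 1) (y : ℝ) (hy : y = 1 - x) :
    HasSum
      (fun j : ℕ =>
        Real.Gamma ((j : ℝ) + 1 + α) / Real.Gamma ((j : ℝ) + 1) *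
          (((j + i).factorial : ℝ) / (j.factorial : ℝ)) * x ^ j)
      ((i.factorial : ℝ) / y ^ ((i : ℝ) + 1 + α) *
        ∑ k ∈ Finset.range (i + 1),
          Real.Gamma (((i - k : ℕ) : ℝ) + 1 + α) / ((i - k).factorial : ℝ) *
            (Real.Gamma (α + 1) / (Real.Gamma (α - (k : ℝ) + 1) * (k.factorial : ℝ))) *
            (-y) ^ k) := by
  obtain ⟨hα0, hα1⟩ := hα
  obtain ⟨hx0, hx1⟩ := hx
  have hy0 : 0 < y := by rw [hy]; linarith
  set b : ℕ → ℝ := fun k => ((i - k : ℕ) : ℝ) + 1 + α with hbdef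
  have hbpos : ∀ k, 0 < b k := fun k => by
    have : (0:ℝ) ≤ ((i - k : ℕ) : ℝ) := Nat.cast_nonneg _
    simp only [hbdef]
    linarith
  set m : ℕ → ℝ := fun k => (-1 : ℝ) ^ k * (i.factorial : ℝ) *
    (Real.Gamma (α + 1) / (Real.Gamma (α - k + 1) * (k.factorial : ℝ))) *
    Real.Gamma (b k) / ((i - k).factorial : ℝ) with hmdef
  have H : HasSum (fun j : ℕ => ∑ k ∈ Finset.range (i + 1),
      m k * (Real.Gamma (j + b k) / (Real.Gamma (b k) * j.factorial) * x ^ j))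
      (∑ k ∈ Finset.range (i + 1), m k * ((1 - x) ^ (-(b k)) : ℝ)) :=
    hasSum_sum (fun k _ => (hasSum_binomial (b k) (hbpos k) x hx0 hx1).mul_left (m k))
  have hfun : (fun j : ℕ => ∑ k ∈ Finset.range (i + 1),
      m k * (Real.Gamma (j + b k) / (Real.Gamma (b k) * j.factorial) * x ^ j))
      = fun j : ℕ => Real.Gamma ((j : ℝ) + 1 + α) / Real.Gamma ((j : ℝ) + 1) *
          (((j + i).factorial : ℝ) / (j.factorial : ℝ)) * x ^ j := by
    funext j
    have hconv := conv_id α hα0 hα1 j i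
    have step1 : ∀ k ∈ Finset.range (i + 1),
        m k * (Real.Gamma (j + b k) / (Real.Gamma (b k) * j.factorial) * x ^ j)
        = ((i.factorial : ℝ) * x ^ j / (j.factorial : ℝ)) *
            ((-1 : ℝ) ^ k * Abin α k * Bfun α j (i - k)) := by
      intro k hk
      have hGb : Real.Gamma (b k) ≠ 0 := (Real.Gamma_pos_of_pos (hbpos k)).ne'
      have hjb : (j : ℝ) + b k = (j : ℝ) + 1 + α + ((i - k : ℕ) : ℝ) := by
        simp only [hbdef]; ring
      rw [hjb]
      simp only [hmdef, Abin, Bfun, hbdef]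
      have hG1 := hne1 α hα0 hα1 k
      have hjf : (j.factorial : ℝ) ≠ 0 := by positivity
      have hkf : (k.factorial : ℝ) ≠ 0 := by positivity
      have hikf : ((i - k).factorial : ℝ) ≠ 0 := by positivity
      have hGik : Real.Gamma (((i - k : ℕ) : ℝ) + 1 + α) ≠ 0 := by
        have := hbpos k
        simp only [hbdef] at this
        exact (Real.Gamma_pos_of_pos this).ne'
      field_simp
    rw [Finset.sum_congr rfl step1, ← Finset.mul_sum, hconv]
    have hGj : Real.Gamma ((j : ℝ) + 1) = (j.factorial : ℝ) := Real.Gamma_nat_eq_factorial j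
    have hcf : (((j + i).choose i : ℕ) : ℝ) * (i.factorial : ℝ) * (j.factorial : ℝ)
        = ((j + i).factorial : ℝ) := by
      have h := Nat.choose_mul_factorial_mul_factorial (Nat.le_add_left i j)
      rw [Nat.add_sub_cancel] at h
      exact_mod_cast congrArg (fun n : ℕ => (n : ℝ)) h
    rw [hGj, ← hcf]
    have hjf : (j.factorial : ℝ) ≠ 0 := by positivity
    field_simp
  have hval : ∑ k ∈ Finset.range (i + 1), m k * ((1 - x) ^ (-(b k)) : ℝ)
      = (i.factorial : ℝ) / y ^ ((i : ℝ) + 1 + α) *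
        ∑ k ∈ Finset.range (i + 1),
          Real.Gamma (((i - k : ℕ) : ℝ) + 1 + α) / ((i - k).factorial : ℝ) *
            (Real.Gamma (α + 1) / (Real.Gamma (α - (k : ℝ) + 1) * (k.factorial : ℝ))) *
            (-y) ^ k := by
    rw [Finset.mul_sum]
    refine Finset.sum_congr rfl fun k hk => ?_
    have hk' : k ≤ i := Nat.lt_succ_iff.mp (Finset.mem_range.mp hk)
    have hxy : (1 : ℝ) - x = y := hy.symm
    have hexp : -(b k) = (k : ℝ) - ((i : ℝ) + 1 + α) := by
      simp only [hbdef]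
      rw [Nat.cast_sub hk']
      ring
    rw [hxy, hexp, Real.rpow_sub hy0, Real.rpow_natCast]
    have hyp : y ^ ((i : ℝ) + 1 + α) ≠ 0 := (Real.rpow_pos_of_pos hy0 _).ne'
    simp only [hmdef, hbdef]
    rw [neg_pow]
    ring
  rw [hfun] at H
  rwa [hval] at H
end

section
/- Let n ≥ 1 be an integer, p ∈ (0,1), α ∈ (0,1), and set q = p/(1−p). Then ∑_{k=0}^∞ k^{1+α} · binom(k+n−1, k) · p^k · (1−p)^n ≤ 16·n·(q + q^{1+α}) + 2·n^{1+α}·q^{1+α}. In other words, if X is a negative binomial random variable of parameters (n,p), then E[X^{1+α}] ≤ 16 n (q + q^{1+α}) + 2 n^{1+α} q^{1+α}. -/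
open Real
open scoped ENNReal

lemma negBinom_hasSum_one {p : ℝ} (hp0 : 0 ≤ p) (hp1 : p < 1) (m : ℕ) :
    HasSum (fun k : ℕ => (((k + m).choose k : ℕ) : ℝ) * p ^ k) (1 / (1 - p) ^ (m + 1)) := by
  have h := hasSum_choose_mul_geometric_of_norm_lt_one (𝕜 := ℝ) m
    (r := p) (by rwa [Real.norm_eq_abs, abs_of_nonneg hp0])
  convert h using 2 with k
  · rfl
  rw [Nat.choose_symm_add]

lemma negBinom_hasSum_k {p : ℝ} (hp0 : 0 ≤ p) (hp1 : p < 1) (m : ℕ) :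
    HasSum (fun k : ℕ => (k : ℝ) * (((k + m).choose k : ℕ) : ℝ) * p ^ k)
      (((m + 1 : ℕ) : ℝ) * p / (1 - p) ^ (m + 2)) := by
  set f : ℕ → ℝ := fun k => (k : ℝ) * (((k + m).choose k : ℕ) : ℝ) * p ^ k with hf
  have h1 : HasSum (fun k : ℕ => f (k + 1)) (((m + 1 : ℕ) : ℝ) * p / (1 - p) ^ (m + 2)) := by
    have h0 := (negBinom_hasSum_one hp0 hp1 (m + 1)).mul_left (((m + 1 : ℕ) : ℝ) * p)
    have hfn : (fun k : ℕ => f (k + 1))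
        = fun k : ℕ => ((m + 1 : ℕ) : ℝ) * p * ((((k + (m + 1)).choose k : ℕ) : ℝ) * p ^ k) := by
      funext k
      have e : k + 1 + m = k + (m + 1) := by omega
      have hc := Nat.choose_succ_right_eq (k + (m + 1)) k
      have hc2 : (k + (m + 1)) - k = m + 1 := by omega
      rw [hc2] at hc
      have hcR : (((k + (m + 1)).choose (k + 1) : ℕ) : ℝ) * ((k : ℝ) + 1)
          = (((k + (m + 1)).choose k : ℕ) : ℝ) * ((m : ℝ) + 1) := by
        exact_mod_cast congrArg (fun x : ℕ => (x : ℝ)) hc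
      simp only [hf, e]
      push_cast
      push_cast at hcR
      rw [pow_succ]
      linear_combination (p ^ k * p) * hcR
    rw [hfn]
    convert h0 using 1
    · rfl
    rw [mul_one_div]
  have h2 := (hasSum_nat_add_iff (f := f) 1).mp h1
  simpa [hf] using h2

lemma negBinom_hasSum_kk {p : ℝ} (hp0 : 0 ≤ p) (hp1 : p < 1) (m : ℕ) :
    HasSum (fun k : ℕ => (k : ℝ) * ((k : ℝ) - 1) * (((k + m).choose k : ℕ) : ℝ) * p ^ k)
      (((m + 1 : ℕ) : ℝ) * ((m + 2 : ℕ) : ℝ) * p ^ 2 / (1 - p) ^ (m + 3)) := by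
  set f : ℕ → ℝ := fun k => (k : ℝ) * ((k : ℝ) - 1) * (((k + m).choose k : ℕ) : ℝ) * p ^ k with hf
  have h1 : HasSum (fun k : ℕ => f (k + 2))
      (((m + 1 : ℕ) : ℝ) * ((m + 2 : ℕ) : ℝ) * p ^ 2 / (1 - p) ^ (m + 3)) := by
    have h0 := (negBinom_hasSum_one hp0 hp1 (m + 2)).mul_left
      (((m + 1 : ℕ) : ℝ) * ((m + 2 : ℕ) : ℝ) * p ^ 2)
    have hfn : (fun k : ℕ => f (k + 2))
        = fun k : ℕ => ((m + 1 : ℕ) : ℝ) * ((m + 2 : ℕ) : ℝ) * p ^ 2 *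
            ((((k + (m + 2)).choose k : ℕ) : ℝ) * p ^ k) := by
      funext k
      have e : k + 2 + m = k + (m + 2) := by omega
      have hc1 := Nat.choose_succ_right_eq (k + (m + 2)) (k + 1)
      have hc1' : (k + (m + 2)) - (k + 1) = m + 1 := by omega
      rw [hc1'] at hc1
      have hc2 := Nat.choose_succ_right_eq (k + (m + 2)) k
      have hc2' : (k + (m + 2)) - k = m + 2 := by omega
      rw [hc2'] at hc2
      have hc1R : (((k + (m + 2)).choose (k + 2) : ℕ) : ℝ) * ((k : ℝ) + 2)
          = (((k + (m + 2)).choose (k + 1) : ℕ) : ℝ) * ((m : ℝ) + 1) := by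
        exact_mod_cast congrArg (fun x : ℕ => (x : ℝ)) hc1
      have hc2R : (((k + (m + 2)).choose (k + 1) : ℕ) : ℝ) * ((k : ℝ) + 1)
          = (((k + (m + 2)).choose k : ℕ) : ℝ) * ((m : ℝ) + 2) := by
        exact_mod_cast congrArg (fun x : ℕ => (x : ℝ)) hc2
      simp only [hf, e]
      push_cast
      push_cast at hc1R hc2R
      rw [pow_add]
      linear_combination (((k : ℝ) + 1) * p ^ k * p ^ 2) * hc1R
        + (((m : ℝ) + 1) * p ^ k * p ^ 2) * hc2R
    rw [hfn]
    convert h0 using 1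
    · rfl
    rw [mul_one_div]
  have h2 := (hasSum_nat_add_iff (f := f) 2).mp h1
  have hz : ∑ i ∈ Finset.range 2, f i = 0 := by
    simp [hf, Finset.sum_range_succ]
  rw [hz, add_zero] at h2
  exact h2


/-- Lemma A.2: moment of order `1+α` of a negative binomial random variable of
parameters `(n, p)`, i.e. with `P(X = k) = binom(k+n-1, k) p^k (1-p)^n`. -/
theorem negBinomial_moment_bound (n : ℕ) (hn : 1 ≤ n) (p : ℝ) (hp : p ∈ Set.Ioo (0 : ℝ) 1)
    (α : ℝ) (hα : α ∈ Set.Ioo (0 : ℝ) 1) (q : ℝ) (hq : q = p / (1 - p)) :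
    ∑' k : ℕ,
        ENNReal.ofReal ((k : ℝ) ^ ((1 : ℝ) + α) *
          ((k + n - 1).choose k : ℝ) * p ^ k * (1 - p) ^ n) ≤
      ENNReal.ofReal
        (16 * n * (q + q ^ ((1 : ℝ) + α)) + 2 * (n : ℝ) ^ ((1 : ℝ) + α) * q ^ ((1 : ℝ) + α)) := by
  obtain ⟨hp0, hp1⟩ := hp
  obtain ⟨hα0, hα1⟩ := hα
  have h1p : 0 < 1 - p := by linarith
  have hq0 : 0 < q := hq ▸ div_pos hp0 h1p
  have hnR : (1:ℝ) ≤ (n:ℝ) := by exact_mod_cast hn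
  have hn0 : (0:ℝ) < n := by linarith
  set m := n - 1 with hm
  have hmn1 : m + 1 = n := by omega
  have hmn2 : m + 2 = n + 1 := by omega
  have hmn3 : m + 3 = n + 2 := by omega
  have hch : ∀ k : ℕ, k + n - 1 = k + m := fun k => by omega
  -- first moment
  have hE1 : HasSum (fun k : ℕ => (k:ℝ) * (((k + n - 1).choose k : ℕ):ℝ) * p ^ k * (1-p)^n)
      ((n:ℝ) * q) := by
    have h := (negBinom_hasSum_k hp0.le hp1 m).mul_right ((1-p)^n)
    rw [hmn1, hmn2] at h
    have hv : ((n:ℕ):ℝ) * p / (1-p)^(n+1) * (1-p)^n = (n:ℝ) * q := by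
      rw [hq, pow_succ]
      field_simp
    rw [hv] at h
    have hfun : (fun k : ℕ => (k:ℝ) * (((k + n - 1).choose k:ℕ):ℝ) * p ^ k * (1-p)^n)
        = fun k : ℕ => (k:ℝ) * (((k + m).choose k:ℕ):ℝ) * p ^ k * (1-p)^n := by
      funext k; rw [hch k]
    rw [hfun]; exact h
  -- second factorial moment
  have hE2 : HasSum (fun k : ℕ =>
        (k:ℝ) * ((k:ℝ)-1) * (((k + n - 1).choose k : ℕ):ℝ) * p ^ k * (1-p)^n)
      ((n:ℝ) * ((n:ℝ)+1) * q^2) := by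
    have h := (negBinom_hasSum_kk hp0.le hp1 m).mul_right ((1-p)^n)
    rw [hmn1, hmn2, hmn3] at h
    have hv : ((n:ℕ):ℝ) * ((n+1:ℕ):ℝ) * p^2 / (1-p)^(n+2) * (1-p)^n
        = (n:ℝ) * ((n:ℝ)+1) * q^2 := by
      rw [hq]
      push_cast
      rw [pow_add]
      field_simp
    rw [hv] at h
    have hfun : (fun k : ℕ =>
          (k:ℝ) * ((k:ℝ)-1) * (((k + n - 1).choose k:ℕ):ℝ) * p ^ k * (1-p)^n)
        = fun k : ℕ => (k:ℝ) * ((k:ℝ)-1) * (((k + m).choose k:ℕ):ℝ) * p ^ k * (1-p)^n := by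
      funext k; rw [hch k]
    rw [hfun]; exact h
  -- second moment
  have hE2' : HasSum (fun k : ℕ => (k:ℝ)^2 * (((k + n - 1).choose k:ℕ):ℝ) * p ^ k * (1-p)^n)
      ((n:ℝ)*((n:ℝ)+1)*q^2 + (n:ℝ)*q) := by
    have h := hE2.add hE1
    have hfun : (fun k : ℕ => (k:ℝ)^2 * (((k + n - 1).choose k:ℕ):ℝ) * p ^ k * (1-p)^n)
        = fun k : ℕ => ((k:ℝ) * ((k:ℝ)-1) * (((k + n - 1).choose k:ℕ):ℝ) * p ^ k * (1-p)^n
            + (k:ℝ) * (((k + n - 1).choose k:ℕ):ℝ) * p ^ k * (1-p)^n) := by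
      funext k; ring
    rw [hfun]; exact h
  have hrest : ∀ k : ℕ, 0 ≤ (((k + n - 1).choose k:ℕ):ℝ) * p ^ k * (1-p)^n := by
    intro k; positivity
  have hBpos : 0 < q ^ ((1:ℝ)+α) := Real.rpow_pos_of_pos hq0 _
  have hApos : 0 < (n:ℝ) ^ ((1:ℝ)+α) := Real.rpow_pos_of_pos hn0 _
  rcases le_or_gt ((n:ℝ) * q) 1 with hsmall | hbig
  · -- small mean case : compare with second moment
    have hq1 : q ≤ 1 := by nlinarith
    have hab : ∀ k : ℕ, (k:ℝ)^((1:ℝ)+α) * (((k + n - 1).choose k:ℕ):ℝ) * p ^ k * (1-p)^n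
        ≤ (k:ℝ)^2 * (((k + n - 1).choose k:ℕ):ℝ) * p ^ k * (1-p)^n := by
      intro k
      have key : (k:ℝ)^((1:ℝ)+α) ≤ (k:ℝ)^2 := by
        rcases Nat.eq_zero_or_pos k with hk | hk
        · subst hk
          simp [Real.zero_rpow (by linarith : (1:ℝ)+α ≠ 0)]
        · have hk1 : (1:ℝ) ≤ (k:ℝ) := by exact_mod_cast hk
          have h2 : (k:ℝ)^((1:ℝ)+α) ≤ (k:ℝ)^(((2:ℕ):ℝ)) :=
            Real.rpow_le_rpow_of_exponent_le hk1 (by push_cast; linarith)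
          rwa [Real.rpow_natCast] at h2
      calc (k:ℝ)^((1:ℝ)+α) * (((k + n - 1).choose k:ℕ):ℝ) * p ^ k * (1-p)^n
          = (k:ℝ)^((1:ℝ)+α) * ((((k + n - 1).choose k:ℕ):ℝ) * p ^ k * (1-p)^n) := by ring
        _ ≤ (k:ℝ)^2 * ((((k + n - 1).choose k:ℕ):ℝ) * p ^ k * (1-p)^n) :=
            mul_le_mul_of_nonneg_right key (hrest k)
        _ = (k:ℝ)^2 * (((k + n - 1).choose k:ℕ):ℝ) * p ^ k * (1-p)^n := by ring
    have hbnn : ∀ k : ℕ, 0 ≤ (k:ℝ)^2 * (((k + n - 1).choose k:ℕ):ℝ) * p ^ k * (1-p)^n := by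
      intro k; positivity
    refine le_trans (ENNReal.tsum_le_tsum fun k => ENNReal.ofReal_le_ofReal (hab k)) ?_
    rw [← ENNReal.ofReal_tsum_of_nonneg hbnn hE2'.summable, hE2'.tsum_eq]
    refine ENNReal.ofReal_le_ofReal ?_
    -- real inequality, small case
    have hx : (n:ℝ)*q*((n:ℝ)*q) ≤ (n:ℝ)^((1:ℝ)+α) * q^((1:ℝ)+α) := by
      have h1 : ((n:ℝ)*q)^(((2:ℕ):ℝ)) ≤ ((n:ℝ)*q)^((1:ℝ)+α) :=
        Real.rpow_le_rpow_of_exponent_ge (by positivity) hsmall (by push_cast; linarith)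
      rw [Real.rpow_natCast] at h1
      rw [← Real.mul_rpow hn0.le hq0.le]
      nlinarith [h1]
    nlinarith [hx, mul_pos hn0 hq0, hBpos, hApos,
      mul_le_mul_of_nonneg_left hq1 (mul_pos hn0 hq0).le,
      mul_pos hn0 hBpos]
  · -- large mean case : interpolation with threshold T = n q
    set T := (n:ℝ) * q with hT
    have hT0 : 0 < T := mul_pos hn0 hq0
    have hT1 : (1:ℝ) ≤ T := hbig.le
    have hb := (hE1.mul_left (T^α)).add (hE2'.mul_left (T^(α-1)))
    have hab : ∀ k : ℕ, (k:ℝ)^((1:ℝ)+α) * (((k + n - 1).choose k:ℕ):ℝ) * p ^ k * (1-p)^n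
        ≤ T^α * ((k:ℝ) * (((k + n - 1).choose k:ℕ):ℝ) * p ^ k * (1-p)^n)
          + T^(α-1) * ((k:ℝ)^2 * (((k + n - 1).choose k:ℕ):ℝ) * p ^ k * (1-p)^n) := by
      intro k
      have key : (k:ℝ)^((1:ℝ)+α) ≤ T^α * (k:ℝ) + T^(α-1) * (k:ℝ)^2 := by
        rcases Nat.eq_zero_or_pos k with hk | hk
        · subst hk
          simp [Real.zero_rpow (by linarith : (1:ℝ)+α ≠ 0)]
        · have hk0 : (0:ℝ) < (k:ℝ) := by exact_mod_cast hk
          rcases le_total ((k:ℝ)) T with hkT | hTk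
          · have h1 : (k:ℝ)^((1:ℝ)+α) = (k:ℝ) * (k:ℝ)^α := by
              rw [Real.rpow_add hk0, Real.rpow_one]
            have h2 : (k:ℝ)^α ≤ T^α := Real.rpow_le_rpow hk0.le hkT hα0.le
            have h3 : (0:ℝ) ≤ T^(α-1) * (k:ℝ)^2 := by positivity
            nlinarith [h2, hk0]
          · have h1 : (k:ℝ)^((1:ℝ)+α) = (k:ℝ)^2 * (k:ℝ)^(α-1) := by
              rw [← Real.rpow_natCast (k:ℝ) 2, ← Real.rpow_add hk0]
              congr 1
              push_cast; ring
            have h2 : (k:ℝ)^(α-1) ≤ T^(α-1) :=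
              Real.rpow_le_rpow_of_nonpos hT0 hTk (by linarith)
            have h3 : (0:ℝ) ≤ T^α * (k:ℝ) := by positivity
            nlinarith [h2, pow_pos hk0 2]
      calc (k:ℝ)^((1:ℝ)+α) * (((k + n - 1).choose k:ℕ):ℝ) * p ^ k * (1-p)^n
          = (k:ℝ)^((1:ℝ)+α) * ((((k + n - 1).choose k:ℕ):ℝ) * p ^ k * (1-p)^n) := by ring
        _ ≤ (T^α * (k:ℝ) + T^(α-1) * (k:ℝ)^2)
              * ((((k + n - 1).choose k:ℕ):ℝ) * p ^ k * (1-p)^n) :=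
            mul_le_mul_of_nonneg_right key (hrest k)
        _ = T^α * ((k:ℝ) * (((k + n - 1).choose k:ℕ):ℝ) * p ^ k * (1-p)^n)
              + T^(α-1) * ((k:ℝ)^2 * (((k + n - 1).choose k:ℕ):ℝ) * p ^ k * (1-p)^n) := by
            ring
    have hbnn : ∀ k : ℕ,
        0 ≤ T^α * ((k:ℝ) * (((k + n - 1).choose k:ℕ):ℝ) * p ^ k * (1-p)^n)
          + T^(α-1) * ((k:ℝ)^2 * (((k + n - 1).choose k:ℕ):ℝ) * p ^ k * (1-p)^n) := by
      intro k; positivity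
    refine le_trans (ENNReal.tsum_le_tsum fun k => ENNReal.ofReal_le_ofReal (hab k)) ?_
    rw [← ENNReal.ofReal_tsum_of_nonneg hbnn hb.summable, hb.tsum_eq]
    refine ENNReal.ofReal_le_ofReal ?_
    -- real inequality, large case
    have e1 : T ^ α * T = T ^ ((1:ℝ)+α) := by
      nth_rewrite 2 [← Real.rpow_one T]
      rw [← Real.rpow_add hT0]
      rw [add_comm]
    have e2 : T ^ (α-1) * T = T ^ α := by
      nth_rewrite 2 [← Real.rpow_one T]
      rw [← Real.rpow_add hT0]
      norm_num
    have f1 : T ^ (α-1) * ((n:ℝ)^2 * q^2) = T ^ ((1:ℝ)+α) := by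
      have h : (n:ℝ)^2 * q^2 = T ^ (((2:ℕ):ℝ)) := by
        rw [Real.rpow_natCast]; rw [hT]; ring
      rw [h, ← Real.rpow_add hT0]
      congr 1
      push_cast; ring
    have f2 : T ^ (α-1) * ((n:ℝ) * q^2) = (n:ℝ)^α * q^((1:ℝ)+α) := by
      rw [hT, Real.mul_rpow hn0.le hq0.le]
      have g1 : (n:ℝ)^(α-1) * (n:ℝ) = (n:ℝ)^α := by
        nth_rewrite 2 [← Real.rpow_one (n:ℝ)]
        rw [← Real.rpow_add hn0]
        norm_num
      have g2 : q^(α-1) * q^2 = q^((1:ℝ)+α) := by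
        rw [← Real.rpow_natCast q 2, ← Real.rpow_add hq0]
        congr 1
        push_cast; ring
      calc (n:ℝ)^(α-1) * q^(α-1) * ((n:ℝ) * q^2)
          = ((n:ℝ)^(α-1) * (n:ℝ)) * (q^(α-1) * q^2) := by ring
        _ = (n:ℝ)^α * q^((1:ℝ)+α) := by rw [g1, g2]
    have bound1 : T ^ α ≤ T := by
      nth_rewrite 2 [← Real.rpow_one T]
      exact Real.rpow_le_rpow_of_exponent_le hT1 hα1.le
    have bound2 : (n:ℝ) ^ α ≤ (n:ℝ) := by
      nth_rewrite 2 [← Real.rpow_one (n:ℝ)]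
      exact Real.rpow_le_rpow_of_exponent_le hnR hα1.le
    have TmulA : T ^ ((1:ℝ)+α) = (n:ℝ)^((1:ℝ)+α) * q^((1:ℝ)+α) := by
      rw [hT]; exact Real.mul_rpow hn0.le hq0.le
    have step : T^α*T + T^(α-1)*((n:ℝ)*((n:ℝ)+1)*q^2 + T)
        = 2*T^((1:ℝ)+α) + (n:ℝ)^α*q^((1:ℝ)+α) + T^α := by
      calc T^α*T + T^(α-1)*((n:ℝ)*((n:ℝ)+1)*q^2 + T)
          = T^α*T + (T^(α-1)*((n:ℝ)^2*q^2) + T^(α-1)*((n:ℝ)*q^2) + T^(α-1)*T) := by ring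
        _ = 2*T^((1:ℝ)+α) + (n:ℝ)^α*q^((1:ℝ)+α) + T^α := by rw [e1, f1, f2, e2]; ring
    rw [step, TmulA]
    linarith [hT, bound1, mul_le_mul_of_nonneg_right bound2 hBpos.le,
      mul_pos hn0 hBpos, mul_pos hn0 hq0]
end

section
/- Let p ∈ (0,1), α ∈ (0,1), and set q = p/(1−p). Then ∑_{k=0}^∞ |k − q|^{1+α} · p^k · (1−p) ≤ 4·(q + q^{1+α}). In other words, if X is a negative binomial (geometric) random variable of parameters (1,p), with mean q, then E[|X − q|^{1+α}] ≤ 4 (q + q^{1+α}). -/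
open Real
open scoped ENNReal

/-!
For `x ≥ 0`, a scale `c > 0` and `0 ≤ α ≤ 1` we have
`x ^ (1 + α) ≤ c ^ (α - 1) * x ^ 2 + c ^ α * x`: the first term dominates when `x ≥ c`, the second
when `x ≤ c`. With `x = |k - q| ≤ k + q` this bounds the centered moment by
`c ^ (α - 1) * Var X + 2 * c ^ α * q`, where `Var X = q + q ^ 2`. The scale `c = 1` handles
`q ≤ 1`, and `c = q` handles `q ≥ 1`.
-/

theorem hasSum_sq_mul_geometric_of_norm_lt_one {𝕜 : Type*} [NormedField 𝕜] {r : 𝕜}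
    (hr : ‖r‖ < 1) : HasSum (fun n : ℕ ↦ (n : 𝕜) ^ 2 * r ^ n) (r * (1 + r) / (1 - r) ^ 3) := by
  have hr1 : 1 - r ≠ 0 := sub_ne_zero.2 fun h ↦ by simp [← h] at hr
  have h2 := hasSum_choose_mul_geometric_of_norm_lt_one 2 hr
  have h1 := hasSum_coe_mul_geometric_of_norm_lt_one hr
  have h0 := hasSum_geometric_of_norm_lt_one hr
  -- `n ^ 2 = 2 * (n + 2).choose 2 - 3 * n - 2`
  convert! ((h2.mul_left 2).sub (h1.mul_left 3)).sub (h0.mul_left 2) using 1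
  · funext n
    have hchoose : ((n + 2).choose 2 : 𝕜) * 2 = (n + 2) * (n + 1) := by
      have h : (n + 2).choose 2 * 2 = (n + 2) * (n + 1) := by
        simpa using (Nat.add_one_mul_choose_eq (n + 1) 1).symm
      exact_mod_cast congrArg (Nat.cast (R := 𝕜)) h
    linear_combination (-r ^ n) * hchoose
  · field_simp
    ring

section GeometricMoments

variable {p : ℝ}

theorem hasSum_geometric_mass (hp0 : 0 < p) (hp1 : p < 1) :
    HasSum (fun k : ℕ ↦ p ^ k * (1 - p)) 1 := by
  have h := (hasSum_geometric_of_lt_one hp0.le hp1).mul_right (1 - p)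
  rwa [inv_mul_cancel₀ (by linarith)] at h

theorem hasSum_geometric_mean (hp0 : 0 < p) (hp1 : p < 1) :
    HasSum (fun k : ℕ ↦ (k : ℝ) * p ^ k * (1 - p)) (p / (1 - p)) := by
  have h := (hasSum_coe_mul_geometric_of_norm_lt_one
    (by rwa [norm_of_nonneg hp0.le])).mul_right (1 - p)
  convert! h using 1
  field_simp [show 1 - p ≠ 0 by linarith]

theorem hasSum_geometric_variance (hp0 : 0 < p) (hp1 : p < 1) :
    HasSum (fun k : ℕ ↦ ((k : ℝ) - p / (1 - p)) ^ 2 * p ^ k * (1 - p)) (p / (1 - p) ^ 2) := by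
  have h2 := (hasSum_sq_mul_geometric_of_norm_lt_one
    (by rwa [norm_of_nonneg hp0.le])).mul_right (1 - p)
  have h := (h2.sub ((hasSum_geometric_mean hp0 hp1).mul_left (2 * (p / (1 - p))))).add
    ((hasSum_geometric_mass hp0 hp1).mul_left ((p / (1 - p)) ^ 2))
  convert! h using 1
  · funext k; ring
  · field_simp [show 1 - p ≠ 0 by linarith]; ring

end GeometricMoments

theorem rpow_one_add_le_mul_sq_add_mul {x c α : ℝ} (hx : 0 ≤ x) (hc : 0 < c) (hα0 : 0 ≤ α)
    (hα1 : α ≤ 1) : x ^ (1 + α) ≤ c ^ (α - 1) * x ^ 2 + c ^ α * x := by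
  rcases hx.eq_or_lt with rfl | hx
  · rw [zero_rpow (by linarith)]; positivity
  rcases le_total x c with hxc | hcx
  · calc x ^ (1 + α) = x ^ α * x := by rw [add_comm, rpow_add_one hx.ne']
      _ ≤ c ^ α * x := by gcongr
      _ ≤ c ^ (α - 1) * x ^ 2 + c ^ α * x := le_add_of_nonneg_left (by positivity)
  · calc x ^ (1 + α) = x ^ (α - 1) * x ^ 2 := by
          rw [← rpow_natCast, ← rpow_add hx]; congr 1; push_cast; ring
      _ ≤ c ^ (α - 1) * x ^ 2 :=
          mul_le_mul_of_nonneg_right (rpow_le_rpow_of_nonpos hc hcx (by linarith)) (by positivity)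
      _ ≤ c ^ (α - 1) * x ^ 2 + c ^ α * x := le_add_of_nonneg_right (by positivity)

theorem tsum_ofReal_abs_sub_rpow_mul_geometric_le {p α c q : ℝ} (hp0 : 0 < p) (hp1 : p < 1)
    (hα0 : 0 ≤ α) (hα1 : α ≤ 1) (hc : 0 < c) (hq : q = p / (1 - p)) :
    ∑' k : ℕ, ENNReal.ofReal (|(k : ℝ) - q| ^ (1 + α) * p ^ k * (1 - p)) ≤
      ENNReal.ofReal (c ^ (α - 1) * (q + q ^ 2) + 2 * c ^ α * q) := by
  have hq0 : 0 ≤ q := by rw [hq]; exact div_nonneg hp0.le (sub_pos.2 hp1).le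
  set g : ℕ → ℝ := fun k ↦ (c ^ (α - 1) * ((k : ℝ) - q) ^ 2 + c ^ α * (k + q)) * p ^ k * (1 - p)
  have hg : HasSum g (c ^ (α - 1) * (q + q ^ 2) + 2 * c ^ α * q) := by
    have h := ((hasSum_geometric_variance hp0 hp1).mul_left (c ^ (α - 1))).add
      (((hasSum_geometric_mean hp0 hp1).add
        ((hasSum_geometric_mass hp0 hp1).mul_left q)).mul_left (c ^ α))
    rw [← hq] at h
    convert! h using 1
    · funext k; ring
    · rw [hq]; field_simp [show 1 - p ≠ 0 by linarith]; ring
  have hg0 : ∀ k, 0 ≤ g k := fun k ↦ by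
    have : 0 ≤ 1 - p := by linarith
    positivity
  have hfg : ∀ k : ℕ, |(k : ℝ) - q| ^ (1 + α) * p ^ k * (1 - p) ≤ g k := fun k ↦ by
    have hdist : |(k : ℝ) - q| ≤ k + q := abs_sub_le_iff.2 ⟨by linarith, by linarith⟩
    have hpow := rpow_one_add_le_mul_sq_add_mul (abs_nonneg ((k : ℝ) - q)) hc hα0 hα1
    rw [sq_abs] at hpow
    have : 0 ≤ 1 - p := by linarith
    simp only [g]
    gcongr
    exact hpow.trans (by gcongr)
  calc ∑' k : ℕ, ENNReal.ofReal (|(k : ℝ) - q| ^ (1 + α) * p ^ k * (1 - p))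
      ≤ ∑' k, ENNReal.ofReal (g k) := ENNReal.tsum_le_tsum fun k ↦ ENNReal.ofReal_le_ofReal (hfg k)
    _ = ENNReal.ofReal (c ^ (α - 1) * (q + q ^ 2) + 2 * c ^ α * q) := by
      rw [← ENNReal.ofReal_tsum_of_nonneg hg0 hg.summable, hg.tsum_eq]

/-- Centered moment of order `1+α` of a geometric (negative binomial with
parameters `(1,p)`) random variable, with `P(X = k) = p^k (1-p)` and mean
`q = p/(1-p)`: `E[|X - q|^{1+α}] ≤ 4 (q + q^{1+α})`. -/
theorem geometric_centered_moment_bound (p : ℝ) (hp : p ∈ Set.Ioo (0 : ℝ) 1)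
    (α : ℝ) (hα : α ∈ Set.Ioo (0 : ℝ) 1) (q : ℝ) (hq : q = p / (1 - p)) :
    ∑' k : ℕ, ENNReal.ofReal (|(k : ℝ) - q| ^ ((1 : ℝ) + α) * p ^ k * (1 - p)) ≤
      ENNReal.ofReal (4 * (q + q ^ ((1 : ℝ) + α))) := by
  obtain ⟨hp0, hp1⟩ := hp
  obtain ⟨hα0, hα1⟩ := hα
  have hq0 : 0 < q := by rw [hq]; exact div_pos hp0 (sub_pos.2 hp1)
  have hqα : 0 ≤ q ^ (1 + α) := rpow_nonneg hq0.le _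
  rcases le_total q 1 with hq1 | hq1
  · refine (tsum_ofReal_abs_sub_rpow_mul_geometric_le hp0 hp1 hα0.le hα1.le one_pos hq).trans
      (ENNReal.ofReal_le_ofReal ?_)
    simp only [one_rpow]
    nlinarith
  · refine (tsum_ofReal_abs_sub_rpow_mul_geometric_le hp0 hp1 hα0.le hα1.le hq0 hq).trans
      (ENNReal.ofReal_le_ofReal ?_)
    have hsub : q ^ (α - 1) * q = q ^ α := by rw [← rpow_add_one hq0.ne', sub_add_cancel]
    have hadd : q ^ α * q = q ^ (1 + α) := by rw [← rpow_add_one hq0.ne', add_comm]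
    have hle : q ^ α ≤ q := rpow_le_self_of_one_le hq1 hα1.le
    have hbound : q ^ (α - 1) * (q + q ^ 2) + 2 * q ^ α * q = q ^ α + 3 * q ^ (1 + α) := by
      linear_combination (1 + q) * hsub + 3 * hadd
    linarith
end
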